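/- arXiv:1303.3913 — 3 statements merged into one kernel-verified Lean document; each statement's English description precedes it below -/
import Mathlib

section
/- In a monoid T with the finite decomposition property, every left-invertible element is invertible. -/
theorem left_invertible_isUnit {T : Type*} [Monoid T]
    (hfd : ∀ t : T, {p : T × T | p.1 * p.2 = t}.Finite)
    (u v : T) (h : v * u = 1) : IsUnit u := by
  have hvu : ∀ n : ℕ, v ^ n * u ^ n = 1 := by
    intro n
    induction n with
    | zero => simp
    | succ n ih =>
      calc v ^ (n + 1) * u ^ (n + 1) = v ^ n * (v * u) * u ^ n := by
            rw [pow_succ, pow_succ']; group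
        _ = 1 := by rw [h, mul_one, ih]
  have hS : {p : T × T | p.1 * p.2 = 1}.Finite := hfd 1
  haveI := hS.to_subtype
  obtain ⟨n, m, hnm, hfe⟩ := Finite.exists_ne_map_eq_of_infinite
    (fun n : ℕ => (⟨(v ^ n, u ^ n), hvu n⟩ : {p : T × T | p.1 * p.2 = 1}))
  simp only [Subtype.mk.injEq, Prod.mk.injEq] at hfe
  wlog hlt : n < m generalizing n m
  · exact this m n hnm.symm ⟨hfe.1.symm, hfe.2.symm⟩ (by omega)
  have hu : u ^ n = u ^ m := hfe.2
  have hk : u ^ (m - n) = 1 := by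
    have : u ^ (m - n) = v ^ n * u ^ n * u ^ (m - n) := by rw [hvu n, one_mul]
    rw [this, mul_assoc, ← pow_add, Nat.add_sub_cancel' hlt.le, ← hu, hvu n]
  exact IsUnit.of_pow_eq_one hk (by omega)
end

section
/- In a monoid T with the finite decomposition property, every right-invertible element u satisfies u^p = 1 for some p > 0 (i.e., u is cyclic/of finite order). -/
theorem right_invertible_cyclic {T : Type*} [Monoid T]
    (hfd : ∀ t : T, {p : T × T | p.1 * p.2 = t}.Finite)
    (u v : T) (h : u * v = 1) : ∃ p : ℕ, 0 < p ∧ u ^ p = 1 := by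
  have key : ∀ n : ℕ, u ^ n * v ^ n = 1 := by
    intro n
    induction n with
    | zero => simp
    | succ k ih =>
      rw [pow_succ u, pow_succ' v, mul_assoc, ← mul_assoc u, h, one_mul, ih]
  -- the map n ↦ (u^n, v^n) lands in a finite set, so it's not injective
  have hfin := hfd 1
  have hmaps : ∀ n : ℕ, (u ^ n, v ^ n) ∈ {p : T × T | p.1 * p.2 = 1} := by
    intro n; exact key n
  have : ¬ Function.Injective (fun n : ℕ => ((u ^ n, v ^ n) : T × T)) := by
    intro hinj
    exact Set.Infinite.mono (Set.range_subset_iff.mpr hmaps)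
      (Set.infinite_range_of_injective hinj) hfin
  rw [Function.not_injective_iff] at this
  obtain ⟨m, n, heq, hne⟩ := this
  simp only [Prod.mk.injEq] at heq
  wlog hlt : n < m generalizing m n
  · exact this n m (Ne.symm hne) ⟨heq.1.symm, heq.2.symm⟩ (hne.lt_or_gt.resolve_right hlt)
  refine ⟨m - n, Nat.sub_pos_of_lt hlt, ?_⟩
  have : u ^ (m - n) * (u ^ n * v ^ n) = 1 := by
    rw [← mul_assoc, ← pow_add, Nat.sub_add_cancel hlt.le, heq.1, key n]
  rwa [key n, mul_one] at this
end

section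
/- Let T be a monoid with the finite decomposition property and define recursively T₀ = T and T_{n+1} = T_n \ T_n^× whenever T_n is a monoid with neutral e_n. If this process continues indefinitely (every T_n has a neutral element e_n), then the intersection ⋂_n T_n is empty; equivalently, T is the disjoint union of the unit groups G_n = T_n^×. -/
theorem iInter_empty_of_infinite_tower {T : Type*} [Monoid T]
    (hfd : ∀ t : T, {p : T × T | p.1 * p.2 = t}.Finite)
    (S : ℕ → Set T) (e : ℕ → T)
    (hS0 : S 0 = Set.univ)
    (hmem : ∀ n, e n ∈ S n)
    (hneut : ∀ n, ∀ x ∈ S n, e n * x = x ∧ x * e n = x)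
    (hsucc : ∀ n, S (n + 1) = S n \ {x ∈ S n | ∃ y ∈ S n, x * y = e n ∧ y * x = e n}) :
    ⋂ n, S n = ∅ := by
  by_contra h
  obtain ⟨t, ht⟩ := Set.nonempty_iff_ne_empty.2 h
  have ht : ∀ n, t ∈ S n := fun n => Set.mem_iInter.1 ht n
  have hstep : ∀ n, S (n + 1) ⊆ S n := fun n => by
    rw [hsucc n]; exact Set.diff_subset
  have hanti : Antitone S := antitone_nat_of_succ_le hstep
  -- e m ∉ S (m+1)
  have hnot : ∀ m, e m ∉ S (m + 1) := by
    intro m hm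
    rw [hsucc m] at hm
    exact hm.2 ⟨hmem m, e m, hmem m, (hneut m (e m) (hmem m)).1,
      (hneut m (e m) (hmem m)).1⟩
  have hinj : Function.Injective e := by
    intro m n hmn
    by_contra hne
    rcases lt_or_gt_of_ne hne with hlt | hlt
    · exact hnot m (hmn ▸ hanti (Nat.succ_le_of_lt hlt) (hmem n))
    · exact hnot n (hmn ▸ hanti (Nat.succ_le_of_lt hlt) (hmem m))
  have : {p : T × T | p.1 * p.2 = t}.Infinite := by
    apply Set.infinite_of_injective_forall_mem
      (f := fun n : ℕ => ((e n, t) : T × T))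
    · intro a b hab
      exact hinj (congrArg Prod.fst hab)
    · intro n
      exact (hneut n t (ht n)).1
  exact this (hfd t)
end
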